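/- Let δ : L_S → {0,1} be a filter satisfying: δ(L) = 1 for every clean subset L ∈ L̄_S, and δ(L) = 0 whenever |L ∩ A| ≥ K_m + 1. Let F = {L ∈ L̄ᶜ_S : δ(L) = 1} be the falsely accepted contaminated subsets and assume F is nonempty. Define p_fa = |F|/|L̄ᶜ_S|, p_N̄ = |L̄_S|/|L_S|, P_A = (1/|F|)·Σ_{L ∈ F} g(L), P_N = (1/|L̄_S|)·Σ_{L ∈ L̄_S} g(L), and P_G = (Σ_{L ∈ L_S} g(L)·δ(L)) / (Σ_{L ∈ L_S} δ(L)). Then ‖P_G − P_N‖₁ = ( p_fa·(1 − p_N̄) / ( p_N̄ + p_fa·(1 − p_N̄) ) ) · ‖P_A − P_N‖₁. (Theorem 3) -/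

import Mathlib

/-!
Since `δ` is `{0,1}`-valued and accepts every clean subset, `∑ δ = |L̄_S| + |F|` and
`∑ δ • g = |L̄_S| • P_N + |F| • P_A`, so `P_G` is the convex combination of `P_N` and `P_A`
with weights proportional to `|L̄_S|` and `|F|`. Hence
`P_G − P_N = (|F| / (|L̄_S| + |F|)) • (P_A − P_N)`, and the coefficient in the theorem is the
same ratio after dividing numerator and denominator by `|L_S| = |L̄_S| + |L̄ᶜ_S|`.
-/

open Finset

/-- The entrywise L1 norm of a real `N × C` matrix: the sum of the absolute
values of its entries. -/
noncomputable def entryL1 {N C : ℕ} (Z : Matrix (Fin N) (Fin C) ℝ) : ℝ :=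
  ∑ i, ∑ j, |Z i j|

lemma entryL1_smul {N C : ℕ} (r : ℝ) (Z : Matrix (Fin N) (Fin C) ℝ) :
    entryL1 (r • Z) = |r| * entryL1 Z := by
  simp [entryL1, abs_mul, Finset.mul_sum]

section Sums

variable {α K E : Type*}

lemma card_smul_inv_card_smul_sum [DivisionRing K] [CharZero K] [AddCommGroup E] [Module K E]
    (s : Finset α) (g : α → E) :
    (#s : K) • ((#s : K)⁻¹ • ∑ L ∈ s, g L) = ∑ L ∈ s, g L := by
  rcases s.eq_empty_or_nonempty with rfl | hs
  · simp
  · exact smul_inv_smul₀ (by exact_mod_cast hs.card_pos.ne') _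

lemma sum_smul_eq_sum_add_sum_filter [DecidableEq α] [Semiring K] [Nontrivial K] [DecidableEq K]
    [AddCommMonoid E] [Module K E] {s t : Finset α} (hts : t ⊆ s) (δ : α → K)
    (hδ01 : ∀ L ∈ s, δ L = 0 ∨ δ L = 1) (hδt : ∀ L ∈ t, δ L = 1) (g : α → E) :
    ∑ L ∈ s, δ L • g L = ∑ L ∈ t, g L + ∑ L ∈ (s \ t).filter (δ · = 1), g L := by
  have ht : ∑ L ∈ t, δ L • g L = ∑ L ∈ t, g L :=
    sum_congr rfl fun L hL => by rw [hδt L hL, one_smul]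
  have hst : ∑ L ∈ s \ t, δ L • g L = ∑ L ∈ (s \ t).filter (δ · = 1), g L := by
    rw [sum_filter]
    refine sum_congr rfl fun L hL => ?_
    rcases hδ01 L (sdiff_subset hL) with h | h <;> simp [h]
  rw [← sum_sdiff hts, ht, hst, add_comm]

end Sums

lemma inv_smul_add_smul_sub_left {K E : Type*} [Field K] [AddCommGroup E] [Module K E] {b f : K}
    (h : b + f ≠ 0) (x y : E) :
    (b + f)⁻¹ • (b • x + f • y) - x = (f / (b + f)) • (y - x) := by
  match_scalars <;> field_simp
  ring

lemma false_acceptance_coeff_eq {K : Type*} [Field K] {b c f : K} (hc : c ≠ 0)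
    (hbc : b + c ≠ 0) :
    f / c * (1 - b / (b + c)) / (b / (b + c) + f / c * (1 - b / (b + c))) = f / (b + f) := by
  have hnum : f / c * (1 - b / (b + c)) = f / (b + c) := by field_simp; ring
  rw [hnum, ← add_div, div_div_div_cancel_right₀ hbc]

theorem graphsac_theorem3_general {N C : ℕ}
    (A : Finset (Fin N))
    (g : Finset (Fin N) → Matrix (Fin N) (Fin C) ℝ)
    (LS LbarS LbarcS : Finset (Finset (Fin N)))
    (hLbarS : LbarS = LS.filter (fun L => L ∩ A = ∅))
    (hLbarcS : LbarcS = LS \ LbarS)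
    (δ : Finset (Fin N) → ℝ)
    (hδ01 : ∀ L ∈ LS, δ L = 0 ∨ δ L = 1)
    (hδclean : ∀ L ∈ LbarS, δ L = 1)
    (F : Finset (Finset (Fin N)))
    (hF : F = LbarcS.filter (fun L => δ L = 1))
    (hFne : F.Nonempty)
    (pfa pN : ℝ)
    (hpfa : pfa = (F.card : ℝ) / (LbarcS.card : ℝ))
    (hpN : pN = (LbarS.card : ℝ) / (LS.card : ℝ))
    (PA PN PG : Matrix (Fin N) (Fin C) ℝ)
    (hPA : PA = ((F.card : ℝ))⁻¹ • ∑ L ∈ F, g L)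
    (hPN : PN = ((LbarS.card : ℝ))⁻¹ • ∑ L ∈ LbarS, g L)
    (hPG : PG = (∑ L ∈ LS, δ L)⁻¹ • ∑ L ∈ LS, δ L • g L) :
    entryL1 (PG - PN) =
      (pfa * (1 - pN) / (pN + pfa * (1 - pN))) * entryL1 (PA - PN) := by
  have hclean : LbarS ⊆ LS := hLbarS ▸ filter_subset _ _
  have hf : (0 : ℝ) < #F := by exact_mod_cast hFne.card_pos
  have hc : (0 : ℝ) < #LbarcS := by
    exact_mod_cast (hFne.mono (hF ▸ filter_subset _ _)).card_pos
  have hcard : (#LS : ℝ) = #LbarS + #LbarcS := by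
    rw [hLbarcS, add_comm]; exact_mod_cast (card_sdiff_add_card_eq_card hclean).symm
  have hsumδ : ∑ L ∈ LS, δ L = #LbarS + #F := by
    simpa [hLbarcS, hF] using
      sum_smul_eq_sum_add_sum_filter hclean δ hδ01 hδclean fun _ => (1 : ℝ)
  have hsumg : ∑ L ∈ LS, δ L • g L = (#LbarS : ℝ) • PN + (#F : ℝ) • PA := by
    rw [sum_smul_eq_sum_add_sum_filter hclean δ hδ01 hδclean, hPN, hPA,
      card_smul_inv_card_smul_sum, card_smul_inv_card_smul_sum, hF, hLbarcS]
  have hmix : PG - PN = ((#F : ℝ) / (#LbarS + #F)) • (PA - PN) := by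
    rw [hPG, hsumδ, hsumg]
    exact inv_smul_add_smul_sub_left (by positivity) PN PA
  rw [hmix, entryL1_smul, abs_of_nonneg (by positivity), hpfa, hpN, hcard,
    false_acceptance_coeff_eq hc.ne' (by positivity)]

/-- **Theorem 3 (GraphSAC).** Let `δ` be a `{0,1}`-valued filter that accepts
every clean subset and rejects every subset containing at least `K_m + 1`
anomalies. With `F` the (nonempty) set of falsely accepted contaminated
subsets, `p_fa = |F|/|L̄ᶜ_S|`, `p_N̄ = |L̄_S|/|L_S|`, `P_A` the average of `g`
over `F`, `P_N` the average over clean subsets, and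
`P_G = (Σ_L g(L)·δ(L)) / (Σ_L δ(L))`, it holds that
`‖P_G − P_N‖₁ = (p_fa·(1−p_N̄)/(p_N̄ + p_fa·(1−p_N̄))) · ‖P_A − P_N‖₁`. -/
theorem graphsac_theorem3 {N C K S Km : ℕ}
    (hK : 1 ≤ K) (hS : 1 ≤ S) (hSNK : S ≤ N - K) (hKm : 1 ≤ Km)
    (A : Finset (Fin N)) (hA : A.card = K)
    (g : Finset (Fin N) → Matrix (Fin N) (Fin C) ℝ)
    (LS LbarS LbarcS : Finset (Finset (Fin N)))
    (hLS : LS = Finset.powersetCard S (Finset.univ : Finset (Fin N)))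
    (hLbarS : LbarS = LS.filter (fun L => L ∩ A = ∅))
    (hLbarcS : LbarcS = LS \ LbarS)
    (δ : Finset (Fin N) → ℝ)
    (hδ01 : ∀ L ∈ LS, δ L = 0 ∨ δ L = 1)
    (hδclean : ∀ L ∈ LbarS, δ L = 1)
    (hδbig : ∀ L ∈ LS, Km + 1 ≤ (L ∩ A).card → δ L = 0)
    (F : Finset (Finset (Fin N)))
    (hF : F = LbarcS.filter (fun L => δ L = 1))
    (hFne : F.Nonempty)
    (pfa pN : ℝ)
    (hpfa : pfa = (F.card : ℝ) / (LbarcS.card : ℝ))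
    (hpN : pN = (LbarS.card : ℝ) / (LS.card : ℝ))
    (PA PN PG : Matrix (Fin N) (Fin C) ℝ)
    (hPA : PA = ((F.card : ℝ))⁻¹ • ∑ L ∈ F, g L)
    (hPN : PN = ((LbarS.card : ℝ))⁻¹ • ∑ L ∈ LbarS, g L)
    (hPG : PG = (∑ L ∈ LS, δ L)⁻¹ • ∑ L ∈ LS, δ L • g L) :
    entryL1 (PG - PN) =
      (pfa * (1 - pN) / (pN + pfa * (1 - pN))) * entryL1 (PA - PN) :=
  graphsac_theorem3_general A g LS LbarS LbarcS hLbarS hLbarcS δ hδ01 hδclean F hF hFne pfa pN hpfa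
    hpN PA PN PG hPA hPN hPG
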